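/- For a skew brace $A$, the following are equivalent: (a) $A$ is both left nilpotent and right nilpotent and $(A,\cdot)$ is nilpotent; (b) $A$ is right nilpotent and both $(A,\cdot)$ and $(A,\circ)$ are nilpotent; (c) $A$ is annihilator nilpotent, i.e., $\mathrm{Ann}_n(A)=A$ for some $n$. -/

import Mathlib

namespace SB

class SkewBrace (A : Type*) extends Group A where
  circ : A → A → A
  sinv : A → A
  circ_assoc : ∀ a b c : A, circ (circ a b) c = circ a (circ b c)
  one_circ : ∀ a : A, circ 1 a = a
  circ_one : ∀ a : A, circ a 1 = a
  sinv_circ : ∀ a : A, circ (sinv a) a = 1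
  circ_sinv : ∀ a : A, circ a (sinv a) = 1
  brace : ∀ a b c : A, circ a (b * c) = circ a b * a⁻¹ * circ a c

open SkewBrace

variable {A : Type*} [SkewBrace A]

/-- The lambda map: `lam a b = a⁻¹ ⬝ (a ∘ b)`. -/
def lam (a b : A) : A := a⁻¹ * circ a b

/-- The star product: `star a b = a⁻¹ ⬝ (a ∘ b) ⬝ b⁻¹`. -/
def star (a b : A) : A := a⁻¹ * circ a b * b⁻¹

/-- Type synonym carrying the multiplicative group (A, circ) of the skew brace. -/
def CircOf (A : Type*) := A

instance : Group (CircOf A) where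
  mul a b := (circ (a : A) (b : A) : A)
  one := (1 : A)
  inv a := (sinv (a : A) : A)
  mul_assoc := circ_assoc (A := A)
  one_mul := one_circ (A := A)
  mul_one := circ_one (A := A)
  inv_mul_cancel := sinv_circ (A := A)

/-- For sets X, Y, the subgroup of (A, mul) generated by all star products x * y. -/
def starSub (X Y : Set A) : Subgroup A :=
  Subgroup.closure {z | ∃ x ∈ X, ∃ y ∈ Y, z = star x y}

/-- The left series: `leftSeries n` is the term A^(n+1), so `leftSeries 0 = A`. -/
def leftSeries : ℕ → Subgroup A
  | 0 => ⊤
  | n + 1 => starSub (Set.univ) ((leftSeries n : Subgroup A) : Set A)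

/-- The right series: `rightSeries n` is the term A^((n+1)), so `rightSeries 0 = A`. -/
def rightSeries : ℕ → Subgroup A
  | 0 => ⊤
  | n + 1 => starSub ((rightSeries n : Subgroup A) : Set A) (Set.univ)

/-- The commutator of x and a with respect to the circle operation. -/
def circCommutator (x a : A) : A := circ (circ (circ x a) (sinv x)) (sinv a)

/-- Internal description of the socle of the quotient by an ideal with underlying set S:
elements x whose class lies in ker(lambda) and in the center of the additive group of the quotient. -/
def socStep (S : Set A) : Set A :=
  {x | ∀ a : A, star x a ∈ S ∧ x * a * x⁻¹ * a⁻¹ ∈ S}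

/-- The socle series: Soc_0 = 1, Soc_(n+1)/Soc_n = Soc(A/Soc_n). -/
def socSeries : ℕ → Set A
  | 0 => {1}
  | n + 1 => socStep (socSeries n)

/-- Internal description of the annihilator of the quotient by an ideal with underlying set S. -/
def annStep (S : Set A) : Set A :=
  {x | ∀ a : A, star x a ∈ S ∧ x * a * x⁻¹ * a⁻¹ ∈ S ∧ circCommutator x a ∈ S}

/-- The annihilator series: Ann_0 = 1, Ann_(n+1)/Ann_n = Ann(A/Ann_n). -/
def annSeries : ℕ → Set A
  | 0 => {1}
  | n + 1 => annStep (annSeries n)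

set_option linter.unusedSectionVars false

/-! ### Basic identities -/

@[simp] lemma lam_one (a : A) : lam a 1 = 1 := by simp [lam, circ_one]

lemma circ_eq_mul_lam (a b : A) : circ a b = a * lam a b := by simp [lam]

lemma lam_mul (a b c : A) : lam a (b * c) = lam a b * lam a c := by
  simp only [lam, brace]; group

@[simp] lemma lam_inv (a b : A) : lam a b⁻¹ = (lam a b)⁻¹ := by
  have h := lam_mul a b b⁻¹
  simp only [mul_inv_cancel, lam_one] at h
  exact (mul_eq_one_iff_inv_eq.mp h.symm).symm

@[simp] lemma one_lam (b : A) : lam 1 b = b := by simp [lam, one_circ]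

lemma circ_inv_right (a b : A) : circ a b⁻¹ = a * (circ a b)⁻¹ * a := by
  have h := brace a b b⁻¹
  rw [mul_inv_cancel, circ_one] at h
  have h2 : circ a b * a⁻¹ * circ a b⁻¹ = a := h.symm
  calc circ a b⁻¹ = (circ a b * a⁻¹)⁻¹ * (circ a b * a⁻¹ * circ a b⁻¹) := by group
  _ = (circ a b * a⁻¹)⁻¹ * a := by rw [h2]
  _ = a * (circ a b)⁻¹ * a := by group

lemma lam_circ (a b c : A) : lam (circ a b) c = lam a (lam b c) := by
  simp only [lam]
  rw [circ_assoc, brace, circ_inv_right]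
  group

@[simp] lemma sinv_sinv (a : A) : sinv (sinv a) = a := inv_inv (G := CircOf A) a

@[simp] lemma sinv_one : (sinv 1 : A) = 1 := inv_one (G := CircOf A)

lemma circ_sinv_rev (a b : A) : sinv (circ a b) = circ (sinv b) (sinv a) :=
  mul_inv_rev (G := CircOf A) a b

lemma lam_sinv_self (a : A) : lam a (sinv a) = a⁻¹ := by
  simp [lam, circ_sinv]

lemma lam_lam_sinv (a b : A) : lam a (lam (sinv a) b) = b := by
  rw [← lam_circ, circ_sinv, one_lam]

lemma lam_sinv_lam (a b : A) : lam (sinv a) (lam a b) = b := by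
  rw [← lam_circ, sinv_circ, one_lam]

lemma star_eq_lam_mul_inv (a b : A) : star a b = lam a b * b⁻¹ := rfl

lemma lam_eq_star_mul (a b : A) : lam a b = star a b * b := by
  rw [star_eq_lam_mul_inv]; group

@[simp] lemma star_one_right (a : A) : star a 1 = 1 := by
  rw [star_eq_lam_mul_inv]; simp

@[simp] lemma star_one_left (b : A) : star 1 b = 1 := by
  rw [star_eq_lam_mul_inv]; simp

lemma star_circ_left (p q a : A) : star (circ p q) a = star p (lam q a) * star q a := by
  simp only [star_eq_lam_mul_inv, lam_circ]
  group

lemma star_mul_right (a y z : A) :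
    star a (y * z) = lam a y * star a z * (lam a y)⁻¹ * star a y := by
  simp only [star_eq_lam_mul_inv, lam_mul]
  group

lemma star_sinv_left (p a : A) : star (sinv p) a = (star p (lam (sinv p) a))⁻¹ := by
  have h := star_circ_left p (sinv p) a
  rw [circ_sinv, star_one_left] at h
  exact (mul_eq_one_iff_inv_eq.mp h.symm).symm

lemma conj_star (z x y : A) :
    z * star x y * z⁻¹ = star x (lam (sinv x) z * y) * star (sinv x) z := by
  simp only [star_eq_lam_mul_inv, lam_mul, lam_lam_sinv, mul_inv_rev]
  group

lemma lam_star (z x y : A) :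
    lam z (star x y) = star (circ (circ z x) (sinv z)) (lam z y) := by
  simp only [star_eq_lam_mul_inv, lam_mul, lam_circ, lam_sinv_lam, lam_inv]

lemma circ_conj_eq (z x : A) :
    circ (circ z x) (sinv z) = z * (lam z x * lam z (star x (sinv z))) * z⁻¹ := by
  rw [circ_eq_mul_lam (circ z x) (sinv z), lam_circ, lam_eq_star_mul x (sinv z), lam_mul,
    lam_sinv_self, circ_eq_mul_lam z x]
  group

lemma mul_eq_circ_lam (x y : A) : x * y = circ x (lam (sinv x) y) := by
  rw [circ_eq_mul_lam, lam_lam_sinv]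


/-! ### Circle group computations -/

lemma circOf_sandwich : ∀ u v : CircOf A, u * (u⁻¹ * v * u) = v * u := by
  intro u v; group

lemma circ_sandwich (a x : A) : circ a (circ (circ (sinv a) x) a) = circ x a :=
  circOf_sandwich a x

lemma circCommutator_eq_circOf : ∀ x a : CircOf A,
    circCommutator (A := A) x a = x * a * x⁻¹ * a⁻¹ := fun _ _ => rfl

lemma lam_sinv_self' (a : A) : lam (sinv a) a = (sinv a)⁻¹ := by
  rw [lam, sinv_circ, mul_one]

lemma sinv_eq_lam (a : A) : sinv a = lam (sinv a) a⁻¹ := by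
  rw [lam_inv, lam_sinv_self', inv_inv]

/-! ### Ideal-like sets -/

structure IdealLike (S : Set A) : Prop where
  one_mem : (1 : A) ∈ S
  mul_mem : ∀ {x y : A}, x ∈ S → y ∈ S → x * y ∈ S
  inv_mem : ∀ {x : A}, x ∈ S → x⁻¹ ∈ S
  conj_mem : ∀ (z : A) {x : A}, x ∈ S → z * x * z⁻¹ ∈ S
  lam_mem : ∀ (z : A) {x : A}, x ∈ S → lam z x ∈ S
  circConj_mem : ∀ (z : A) {x : A}, x ∈ S → circ (circ z x) (sinv z) ∈ S

namespace IdealLike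

variable {S : Set A} (hS : IdealLike S)
include hS

lemma sinv_mem {x : A} (hx : x ∈ S) : sinv x ∈ S := by
  rw [sinv_eq_lam]
  exact hS.lam_mem _ (hS.inv_mem hx)

lemma circ_mem {x y : A} (hx : x ∈ S) (hy : y ∈ S) : circ x y ∈ S := by
  rw [circ_eq_mul_lam]
  exact hS.mul_mem hx (hS.lam_mem _ hy)

lemma star_right_mem (z : A) {x : A} (hx : x ∈ S) : star z x ∈ S := by
  rw [star_eq_lam_mul_inv]
  exact hS.mul_mem (hS.lam_mem _ hx) (hS.inv_mem hx)

lemma star_left_mem {x : A} (hx : x ∈ S) (a : A) : star x a ∈ S := by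
  have hy : circ (circ (sinv a) x) a ∈ S := by
    have := hS.circConj_mem (sinv a) hx
    rwa [sinv_sinv] at this
  have hkey : star x a = x⁻¹ * (a * lam a (circ (circ (sinv a) x) a) * a⁻¹) := by
    have h2 : circ x a = a * lam a (circ (circ (sinv a) x) a) := by
      rw [← circ_eq_mul_lam, circ_sandwich]
    rw [star, h2]; group
  rw [hkey]
  exact hS.mul_mem (hS.inv_mem hx) (hS.conj_mem a (hS.lam_mem a hy))

lemma circComm_left_mem {x : A} (hx : x ∈ S) (a : A) : circCommutator x a ∈ S := by
  have h1 : circ (circ a x) (sinv a) ∈ S := hS.circConj_mem a hx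
  have key : ∀ u v : CircOf A, u * v * u⁻¹ * v⁻¹ = u * (v * u * v⁻¹)⁻¹ := by
    intro u v; group
  have : circCommutator x a = circ x (sinv (circ (circ a x) (sinv a))) := key x a
  rw [this]
  exact hS.circ_mem hx (hS.sinv_mem h1)

end IdealLike

/-! ### Congruence modulo an ideal-like set -/

def congM (S : Set A) (g h : A) : Prop := ∃ m ∈ S, g = m * h

namespace IdealLike

variable {S : Set A} (hS : IdealLike S)
include hS

lemma congM_refl (g : A) : congM S g g := ⟨1, hS.one_mem, (one_mul g).symm⟩

lemma congM_of_mem {m : A} (hm : m ∈ S) (h : A) : congM S (m * h) h := ⟨m, hm, rfl⟩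

lemma congM_mul {g₁ h₁ g₂ h₂ : A} (e₁ : congM S g₁ h₁) (e₂ : congM S g₂ h₂) :
    congM S (g₁ * g₂) (h₁ * h₂) := by
  obtain ⟨m, hm, rfl⟩ := e₁
  obtain ⟨m', hm', rfl⟩ := e₂
  exact ⟨m * (h₁ * m' * h₁⁻¹), hS.mul_mem hm (hS.conj_mem _ hm'), by group⟩

lemma congM_symm {g h : A} (e : congM S g h) : congM S h g := by
  obtain ⟨m, hm, rfl⟩ := e
  exact ⟨m⁻¹, hS.inv_mem hm, by group⟩

lemma congM_trans {g h k : A} (e₁ : congM S g h) (e₂ : congM S h k) : congM S g k := by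
  obtain ⟨m, hm, rfl⟩ := e₁
  obtain ⟨m', hm', rfl⟩ := e₂
  exact ⟨m * m', hS.mul_mem hm hm', by group⟩

lemma congM_lam (z : A) {g h : A} (e : congM S g h) : congM S (lam z g) (lam z h) := by
  obtain ⟨m, hm, rfl⟩ := e
  rw [lam_mul]
  exact hS.congM_of_mem (hS.lam_mem z hm) _

lemma congM_inv {g h : A} (e : congM S g h) : congM S g⁻¹ h⁻¹ := by
  obtain ⟨m, hm, rfl⟩ := e
  exact ⟨h⁻¹ * m⁻¹ * (h⁻¹)⁻¹, hS.conj_mem h⁻¹ (hS.inv_mem hm), by group⟩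

lemma congM_mem {g h : A} (e : congM S g h) (hh : h ∈ S) : g ∈ S := by
  obtain ⟨m, hm, rfl⟩ := e
  exact hS.mul_mem hm hh

lemma congM_mul_left (c : A) {g h : A} (e : congM S g h) : congM S (c * g) (c * h) :=
  hS.congM_mul (hS.congM_refl c) e

lemma congM_mul_right {g h : A} (e : congM S g h) (c : A) : congM S (g * c) (h * c) :=
  hS.congM_mul e (hS.congM_refl c)

lemma congM_of_eq {g h : A} (e : g = h) : congM S g h := e ▸ hS.congM_refl g

end IdealLike

/-! ### Generic group commutator identities -/

section GenericGroup

variable {G : Type*} [Group G]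

lemma grp_comm_mul_left (u v a : G) :
    (u * v) * a * (u * v)⁻¹ * a⁻¹ = u * (v * a * v⁻¹ * a⁻¹) * u⁻¹ * (u * a * u⁻¹ * a⁻¹) := by
  group

lemma grp_comm_swap_inv (x a : G) : (x * a * x⁻¹ * a⁻¹)⁻¹ = a * x * a⁻¹ * x⁻¹ := by group

lemma grp_comm_inv_left (x a : G) : x⁻¹ * a * x * a⁻¹ = x⁻¹ * (x * a * x⁻¹ * a⁻¹)⁻¹ * x := by
  group

lemma grp_comm_inv_left' (x a : G) :
    x⁻¹ * a * (x⁻¹)⁻¹ * a⁻¹ = x⁻¹ * (x * a * x⁻¹ * a⁻¹)⁻¹ * x := by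
  group

lemma grp_mul_comm_decomp (u v : G) : u * v = (u * v * u⁻¹ * v⁻¹) * (v * u) := by group

end GenericGroup

/-! ### Circle commutator expansion lemmas -/

lemma circComm_mul (u v a : A) :
    circCommutator (circ u v) a =
      circ (circ (circ u (circCommutator v a)) (sinv u)) (circCommutator u a) := by
  exact grp_comm_mul_left (G := CircOf A) u v a

lemma circComm_sinv (u a : A) :
    circCommutator (sinv u) a = circ (circ (sinv u) (sinv (circCommutator u a))) u := by
  exact grp_comm_inv_left' (G := CircOf A) u a

lemma circComm_swap (u a : A) : circCommutator a u = sinv (circCommutator u a) := by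
  exact (grp_comm_swap_inv (G := CircOf A) u a).symm

namespace IdealLike

variable {S : Set A} (hS : IdealLike S)
include hS

lemma circConj_mem' (z : A) {x : A} (hx : x ∈ S) : circ z (circ x (sinv z)) ∈ S := by
  rw [← circ_assoc]
  exact hS.circConj_mem z hx

lemma circComm_right_mem (u : A) {x : A} (hx : x ∈ S) : circCommutator u x ∈ S := by
  rw [circComm_swap]
  exact hS.sinv_mem (hS.circComm_left_mem hx u)

lemma comm_right_mem (u : A) {x : A} (hx : x ∈ S) : u * x * u⁻¹ * x⁻¹ ∈ S := by
  have h : u * x * u⁻¹ * x⁻¹ = (u * x * u⁻¹) * x⁻¹ := by group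
  rw [h]
  exact hS.mul_mem (hS.conj_mem u hx) (hS.inv_mem hx)

lemma comm_left_mem {x : A} (hx : x ∈ S) (a : A) : x * a * x⁻¹ * a⁻¹ ∈ S := by
  have h : x * a * x⁻¹ * a⁻¹ = x * (a * x⁻¹ * a⁻¹ * x) * x⁻¹ := by group
  rw [h]
  exact hS.conj_mem x (by
    have := hS.conj_mem a (hS.inv_mem hx)
    exact hS.mul_mem this hx)

lemma congM_circ_left {c : A} (hc : c ∈ S) (z : A) : congM S (circ c z) z := by
  have h : circ c z = (c * star c z) * z := by
    rw [circ_eq_mul_lam, lam_eq_star_mul]; group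
  rw [h]
  exact hS.congM_of_mem (hS.mul_mem hc (hS.star_left_mem hc z)) z

lemma congM_circ_mul {y a : A} (hs : star y a ∈ S) : congM S (circ y a) (y * a) := by
  have h : circ y a = (y * star y a * y⁻¹) * (y * a) := by
    rw [circ_eq_mul_lam, lam_eq_star_mul]; group
  rw [h]
  exact hS.congM_of_mem (hS.conj_mem y hs) _

end IdealLike

/-! ### The left star absorption lemma -/

lemma star_into_of_annStep {S : Set A} (hS : IdealLike S) {y : A} (hy : y ∈ annStep S)
    (a : A) : star a y ∈ S := by
  have hcomm : circCommutator a y ∈ S := by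
    rw [circComm_swap]
    exact hS.sinv_mem (hy a).2.2
  -- circ a y = circ (circCommutator a y) (circ y a)
  have hdec : circ a y = circ (circCommutator a y) (circ y a) := by
    have h : ∀ u v : CircOf A, u * v = (u * v * u⁻¹ * v⁻¹) * (v * u) := fun u v => by group
    exact h a y
  have e1 : congM S (circ a y) (y * a) := by
    rw [hdec]
    exact hS.congM_trans (hS.congM_circ_left hcomm (circ y a)) (hS.congM_circ_mul (hy a).1)
  have e2 : congM S (star a y) (a⁻¹ * (y * a) * y⁻¹) := by
    have : star a y = a⁻¹ * circ a y * y⁻¹ := rfl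
    rw [this]
    exact hS.congM_mul (hS.congM_mul_left a⁻¹ e1) (hS.congM_refl y⁻¹)
  apply hS.congM_mem e2
  have h3 : a⁻¹ * (y * a) * y⁻¹ = (y * a⁻¹ * y⁻¹ * a)⁻¹ := by group
  rw [h3]
  apply hS.inv_mem
  simpa using (hy a⁻¹).2.1

/-! ### The annihilator step preserves ideal-likeness -/

lemma mul_eq_circ_star (x y : A) :
    x * y = circ (circ x y) (lam (sinv (circ x y)) (y⁻¹ * (star x y)⁻¹ * y)) := by
  rw [← mul_eq_circ_lam, circ_eq_mul_lam x y, lam_eq_star_mul]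
  group

namespace IdealLike

variable {S : Set A} (hS : IdealLike S)
include hS

lemma annStep_of_mem {x : A} (hx : x ∈ S) : x ∈ annStep S := fun a =>
  ⟨hS.star_left_mem hx a, hS.comm_left_mem hx a, hS.circComm_left_mem hx a⟩

lemma annStep_mul_right {w s : A} (hw : w ∈ annStep S) (hs : s ∈ S) :
    w * s ∈ annStep S := by
  intro a
  have hdef : w * s = circ w (lam (sinv w) s) := mul_eq_circ_lam w s
  have hs' : lam (sinv w) s ∈ S := hS.lam_mem _ hs
  refine ⟨?_, ?_, ?_⟩
  · rw [hdef, star_circ_left]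
    exact hS.mul_mem ((hw _).1) (hS.star_left_mem hs' a)
  · rw [grp_comm_mul_left]
    exact hS.mul_mem (hS.conj_mem w (hS.comm_left_mem hs a)) ((hw a).2.1)
  · rw [hdef, circComm_mul]
    exact hS.circ_mem (hS.circConj_mem w (hS.circComm_left_mem hs' a)) ((hw a).2.2)

lemma annStep_mul_left {s w : A} (hs : s ∈ S) (hw : w ∈ annStep S) :
    s * w ∈ annStep S := by
  intro a
  have ht : (w⁻¹ * (star s w)⁻¹ * w) ∈ S := by
    have h1 : star s w ∈ S := hS.star_left_mem hs w
    have h2 : w⁻¹ * (star s w)⁻¹ * w = w⁻¹ * (star s w)⁻¹ * (w⁻¹)⁻¹ := by rw [inv_inv]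
    rw [h2]; exact hS.conj_mem w⁻¹ (hS.inv_mem h1)
  have ht' : lam (sinv (circ s w)) (w⁻¹ * (star s w)⁻¹ * w) ∈ S := hS.lam_mem _ ht
  have hdef := mul_eq_circ_star s w
  refine ⟨?_, ?_, ?_⟩
  · rw [hdef, star_circ_left, star_circ_left]
    exact hS.mul_mem (hS.mul_mem (hS.star_left_mem hs _) ((hw _).1))
      (hS.star_left_mem ht' a)
  · rw [grp_comm_mul_left]
    exact hS.mul_mem (hS.conj_mem s ((hw a).2.1)) (hS.comm_left_mem hs a)
  · rw [hdef, circComm_mul, circComm_mul]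
    exact hS.circ_mem
      (hS.circConj_mem _ (hS.circComm_left_mem ht' a))
      (hS.circ_mem (hS.circConj_mem s ((hw a).2.2)) (hS.circComm_left_mem hs a))

lemma annStep_circ {x y : A} (hx : x ∈ annStep S) (hy : y ∈ annStep S) :
    circ x y ∈ annStep S := by
  intro a
  refine ⟨?_, ?_, ?_⟩
  · rw [star_circ_left]
    exact hS.mul_mem ((hx _).1) ((hy _).1)
  · have hdef : circ x y = x * (star x y * y) := by
      rw [circ_eq_mul_lam, lam_eq_star_mul]
    rw [hdef, grp_comm_mul_left, grp_comm_mul_left]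
    exact hS.mul_mem (hS.conj_mem x (hS.mul_mem
        (hS.conj_mem (star x y) ((hy a).2.1)) (hS.comm_left_mem ((hx y).1) a)))
      ((hx a).2.1)
  · rw [circComm_mul]
    exact hS.circ_mem (hS.circConj_mem x ((hy a).2.2)) ((hx a).2.2)

lemma annStep_sinv_mul_self {x : A} (hx : x ∈ annStep S) : sinv x * x ∈ S := by
  have h1 : star x (sinv x) ∈ S := (hx (sinv x)).1
  have h2 : star x (sinv x) = x⁻¹ * (sinv x)⁻¹ := by
    rw [star_eq_lam_mul_inv, lam_sinv_self]
  rw [h2] at h1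
  have h3 := hS.inv_mem h1
  simpa [mul_inv_rev] using h3

lemma annStep_sinv {x : A} (hx : x ∈ annStep S) : sinv x ∈ annStep S := by
  have hm : sinv x * x ∈ S := hS.annStep_sinv_mul_self hx
  intro a
  refine ⟨?_, ?_, ?_⟩
  · rw [star_sinv_left]
    exact hS.inv_mem ((hx _).1)
  · have hdef : sinv x = (sinv x * x) * x⁻¹ := by group
    rw [hdef, grp_comm_mul_left, grp_comm_inv_left']
    refine hS.mul_mem (hS.conj_mem _ ?_) (hS.comm_left_mem hm a)
    have h3 : x⁻¹ * (x * a * x⁻¹ * a⁻¹)⁻¹ * x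
        = x⁻¹ * (x * a * x⁻¹ * a⁻¹)⁻¹ * (x⁻¹)⁻¹ := by rw [inv_inv]
    rw [h3]
    exact hS.conj_mem x⁻¹ (hS.inv_mem ((hx a).2.1))
  · rw [circComm_sinv]
    have h4 : circ (circ (sinv x) (sinv (circCommutator x a))) x
        = circ (circ (sinv x) (sinv (circCommutator x a))) (sinv (sinv x)) := by
      rw [sinv_sinv]
    rw [h4]
    exact hS.circConj_mem (sinv x) (hS.sinv_mem ((hx a).2.2))

lemma annStep_inv {x : A} (hx : x ∈ annStep S) : x⁻¹ ∈ annStep S := by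
  have hm : sinv x * x ∈ S := hS.annStep_sinv_mul_self hx
  have hdef : x⁻¹ = (sinv x * x)⁻¹ * sinv x := by group
  rw [hdef]
  exact hS.annStep_mul_left (hS.inv_mem hm) (hS.annStep_sinv hx)

lemma annStep_mul {x y : A} (hx : x ∈ annStep S) (hy : y ∈ annStep S) :
    x * y ∈ annStep S := by
  have hdef : x * y = circ x y * (y⁻¹ * (star x y)⁻¹ * y) := by
    rw [circ_eq_mul_lam, lam_eq_star_mul]
    group
  have ht : y⁻¹ * (star x y)⁻¹ * y ∈ S := by
    have h2 : y⁻¹ * (star x y)⁻¹ * y = y⁻¹ * (star x y)⁻¹ * (y⁻¹)⁻¹ := by rw [inv_inv]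
    rw [h2]
    exact hS.conj_mem y⁻¹ (hS.inv_mem ((hx y).1))
  rw [hdef]
  exact hS.annStep_mul_right (hS.annStep_circ hx hy) ht

lemma annStep_conj (z : A) {x : A} (hx : x ∈ annStep S) : z * x * z⁻¹ ∈ annStep S := by
  have hs : z * x * z⁻¹ * x⁻¹ ∈ S := by
    have h := hS.inv_mem ((hx z).2.1)
    have h2 : (x * z * x⁻¹ * z⁻¹)⁻¹ = z * x * z⁻¹ * x⁻¹ := by group
    rwa [h2] at h
  have hdef : z * x * z⁻¹ = (z * x * z⁻¹ * x⁻¹) * x := by group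
  rw [hdef]
  exact hS.annStep_mul_left hs hx

lemma annStep_lam (z : A) {x : A} (hx : x ∈ annStep S) : lam z x ∈ annStep S := by
  rw [lam_eq_star_mul]
  exact hS.annStep_mul_left (star_into_of_annStep hS hx z) hx

lemma annStep_circConj (z : A) {x : A} (hx : x ∈ annStep S) :
    circ (circ z x) (sinv z) ∈ annStep S := by
  rw [circ_conj_eq]
  exact hS.annStep_conj z
    (hS.annStep_mul_right (hS.annStep_lam z hx) (hS.lam_mem z ((hx (sinv z)).1)))

theorem annStep_idealLike : IdealLike (annStep S) where
  one_mem := hS.annStep_of_mem hS.one_mem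
  mul_mem := fun hx hy => hS.annStep_mul hx hy
  inv_mem := fun hx => hS.annStep_inv hx
  conj_mem := fun z {_} hx => hS.annStep_conj z hx
  lam_mem := fun z {_} hx => hS.annStep_lam z hx
  circConj_mem := fun z {_} hx => hS.annStep_circConj z hx

end IdealLike

lemma idealLike_singleton_one : IdealLike ({1} : Set A) := by
  constructor
  · rfl
  · intro x y hx hy
    simp only [Set.mem_singleton_iff] at *
    subst hx; subst hy; simp
  · intro x hx
    simp only [Set.mem_singleton_iff] at *
    subst hx; simp
  · intro z x hx
    simp only [Set.mem_singleton_iff] at *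
    subst hx; simp
  · intro z x hx
    simp only [Set.mem_singleton_iff] at *
    subst hx; simp
  · intro z x hx
    simp only [Set.mem_singleton_iff] at *
    subst hx
    rw [circ_one, circ_sinv]

theorem annSeries_idealLike : ∀ n : ℕ, IdealLike (annSeries (A := A) n)
  | 0 => idealLike_singleton_one
  | n + 1 => (annSeries_idealLike n).annStep_idealLike

lemma annSeries_mono_succ (n : ℕ) : annSeries (A := A) n ⊆ annSeries (A := A) (n + 1) :=
  fun _ hx => (annSeries_idealLike n).annStep_of_mem hx

/-! ### Annihilator nilpotency implies everything -/

def annSubgroup (n : ℕ) : Subgroup A where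
  carrier := annSeries n
  one_mem' := (annSeries_idealLike n).one_mem
  mul_mem' := fun hx hy => (annSeries_idealLike n).mul_mem hx hy
  inv_mem' := fun hx => (annSeries_idealLike n).inv_mem hx

def annSubgroupC (n : ℕ) : Subgroup (CircOf A) where
  carrier := by exact annSeries (A := A) n
  one_mem' := (annSeries_idealLike (A := A) n).one_mem
  mul_mem' := fun hx hy => (annSeries_idealLike (A := A) n).circ_mem hx hy
  inv_mem' := fun hx => (annSeries_idealLike (A := A) n).sinv_mem hx

lemma mem_annSubgroup {n : ℕ} {x : A} : x ∈ annSubgroup (A := A) n ↔ x ∈ annSeries (A := A) n :=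
  Iff.rfl

theorem isNilpotent_mul_of_ann {n : ℕ} (h : annSeries (A := A) n = Set.univ) :
    Group.IsNilpotent A := by
  apply (nilpotent_iff_finite_ascending_central_series A).mpr
  refine ⟨n, fun k => annSubgroup k, ⟨?_, ?_⟩, ?_⟩
  · ext x
    simp only [mem_annSubgroup, Subgroup.mem_bot]
    exact Iff.rfl
  · intro x k hx g
    exact (hx g).2.1
  · ext x
    simp only [mem_annSubgroup, Subgroup.mem_top, iff_true, h]
    trivial
  
theorem isNilpotent_circ_of_ann {n : ℕ} (h : annSeries (A := A) n = Set.univ) :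
    Group.IsNilpotent (CircOf A) := by
  apply (nilpotent_iff_finite_ascending_central_series (CircOf A)).mpr
  refine ⟨n, fun k => annSubgroupC k, ⟨?_, ?_⟩, ?_⟩
  · ext x
    simp only [Subgroup.mem_bot]
    exact Iff.rfl
  · intro x k hx g
    exact (hx g).2.2
  · ext x
    simp only [Subgroup.mem_top, iff_true]
    show x ∈ annSeries (A := A) n
    rw [h]; trivial

theorem rightSeries_bot_of_ann {n : ℕ} (h : annSeries (A := A) n = Set.univ) :
    rightSeries (A := A) n = ⊥ := by
  have claim : ∀ k, k ≤ n → (rightSeries (A := A) k : Set A) ⊆ annSeries (n - k) := by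
    intro k
    induction k with
    | zero => intro _ x _; rw [Nat.sub_zero, h]; trivial
    | succ k ih =>
      intro hk x hx
      have hk' : k ≤ n := Nat.le_of_succ_le hk
      have heq : n - k = (n - (k + 1)) + 1 := by omega
      have : x ∈ starSub ((rightSeries (A := A) k : Subgroup A) : Set A) Set.univ := hx
      refine Subgroup.closure_le (annSubgroup (A := A) (n - (k+1))) |>.mpr ?_ this
      rintro z ⟨u, hu, y, -, rfl⟩
      have hu' : u ∈ annSeries (n - k) := ih hk' hu
      rw [heq] at hu'
      exact (hu' y).1
  have h0 : (rightSeries (A := A) n : Set A) ⊆ annSeries 0 := by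
    simpa using claim n le_rfl
  ext x
  simp only [Subgroup.mem_bot]
  constructor
  · intro hx
    exact h0 hx
  · rintro rfl
    exact Subgroup.one_mem _

theorem leftSeries_bot_of_ann {n : ℕ} (h : annSeries (A := A) n = Set.univ) :
    leftSeries (A := A) n = ⊥ := by
  have claim : ∀ k, k ≤ n → (leftSeries (A := A) k : Set A) ⊆ annSeries (n - k) := by
    intro k
    induction k with
    | zero => intro _ x _; rw [Nat.sub_zero, h]; trivial
    | succ k ih =>
      intro hk x hx
      have hk' : k ≤ n := Nat.le_of_succ_le hk
      have heq : n - k = (n - (k + 1)) + 1 := by omega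
      have : x ∈ starSub Set.univ ((leftSeries (A := A) k : Subgroup A) : Set A) := hx
      refine Subgroup.closure_le (annSubgroup (A := A) (n - (k+1))) |>.mpr ?_ this
      rintro z ⟨u, -, y, hy, rfl⟩
      have hy' : y ∈ annSeries (n - k) := ih hk' hy
      rw [heq] at hy'
      exact star_into_of_annStep (annSeries_idealLike (n - (k+1))) hy' u
  have h0 : (leftSeries (A := A) n : Set A) ⊆ annSeries 0 := by
    simpa using claim n le_rfl
  ext x
  simp only [Subgroup.mem_bot]
  constructor
  · intro hx
    exact h0 hx
  · rintro rfl
    exact Subgroup.one_mem _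

/-! ### Series facts: right series, left series, lower central series -/

lemma idealLike_coe_top : IdealLike ((⊤ : Subgroup A) : Set A) := by
  constructor <;> intros <;> exact Subgroup.mem_top _

lemma rightSeries_star {i : ℕ} {x : A} (hx : x ∈ rightSeries (A := A) i) (a : A) :
    star x a ∈ rightSeries (A := A) (i + 1) :=
  Subgroup.subset_closure ⟨x, hx, a, trivial, rfl⟩

lemma leftSeries_star {i : ℕ} {y : A} (hy : y ∈ leftSeries (A := A) i) (a : A) :
    star a y ∈ leftSeries (A := A) (i + 1) :=
  Subgroup.subset_closure ⟨a, trivial, y, hy, rfl⟩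

lemma rightSeries_mono_succ : ∀ i, rightSeries (A := A) (i + 1) ≤ rightSeries (A := A) i := by
  intro i
  induction i with
  | zero => exact le_top
  | succ i ih =>
    apply (Subgroup.closure_le _).mpr
    rintro z ⟨u, hu, y, -, rfl⟩
    exact rightSeries_star (ih hu) y

lemma leftSeries_mono_succ : ∀ i, leftSeries (A := A) (i + 1) ≤ leftSeries (A := A) i := by
  intro i
  induction i with
  | zero => exact le_top
  | succ i ih =>
    apply (Subgroup.closure_le _).mpr
    rintro z ⟨u, -, y, hy, rfl⟩
    exact leftSeries_star (ih hy) u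

lemma rightSeries_antitone : Antitone (rightSeries (A := A)) :=
  antitone_nat_of_succ_le rightSeries_mono_succ

lemma leftSeries_antitone : Antitone (leftSeries (A := A)) :=
  antitone_nat_of_succ_le leftSeries_mono_succ

theorem rightSeries_idealLike : ∀ i, IdealLike ((rightSeries (A := A) i : Subgroup A) : Set A) := by
  intro i
  induction i with
  | zero => exact idealLike_coe_top
  | succ i hI =>
    have hconj : ∀ (z x : A), x ∈ rightSeries (A := A) (i+1) →
        z * x * z⁻¹ ∈ rightSeries (A := A) (i+1) := by
      intro z x hx
      refine Subgroup.closure_induction ?_ ?_ ?_ ?_ hx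
      · rintro w ⟨u, hu, y, -, rfl⟩
        rw [conj_star]
        exact Subgroup.mul_mem _ (Subgroup.subset_closure ⟨u, hu, _, trivial, rfl⟩)
          (Subgroup.subset_closure ⟨sinv u, hI.sinv_mem hu, _, trivial, rfl⟩)
      · simpa using Subgroup.one_mem _
      · intro p q _ _ hp hq
        have h : z * (p * q) * z⁻¹ = (z * p * z⁻¹) * (z * q * z⁻¹) := by group
        rw [h]; exact Subgroup.mul_mem _ hp hq
      · intro p _ hp
        have h : z * p⁻¹ * z⁻¹ = (z * p * z⁻¹)⁻¹ := by group
        rw [h]; exact Subgroup.inv_mem _ hp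
    have hlam : ∀ (z x : A), x ∈ rightSeries (A := A) (i+1) →
        lam z x ∈ rightSeries (A := A) (i+1) := by
      intro z x hx
      refine Subgroup.closure_induction ?_ ?_ ?_ ?_ hx
      · rintro w ⟨u, hu, y, -, rfl⟩
        rw [lam_star]
        exact Subgroup.subset_closure ⟨_, hI.circConj_mem z hu, _, trivial, rfl⟩
      · simpa using Subgroup.one_mem _
      · intro p q _ _ hp hq
        rw [lam_mul]; exact Subgroup.mul_mem _ hp hq
      · intro p _ hp
        rw [lam_inv]; exact Subgroup.inv_mem _ hp
    constructor
    · exact Subgroup.one_mem _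
    · intro x y hx hy; exact Subgroup.mul_mem _ hx hy
    · intro x hx; exact Subgroup.inv_mem _ hx
    · exact fun z {x} hx => hconj z x hx
    · exact fun z {x} hx => hlam z x hx
    · intro z x hx
      rw [circ_conj_eq]
      refine hconj z _ (Subgroup.mul_mem _ (hlam z x hx) (hlam z _ ?_))
      exact rightSeries_mono_succ (i+1) (rightSeries_star hx (sinv z))

lemma leftSeries_lam : ∀ i, ∀ (z : A) {x : A}, x ∈ leftSeries (A := A) i →
    lam z x ∈ leftSeries (A := A) i := by
  intro i
  induction i with
  | zero => intro z x _; trivial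
  | succ i ih =>
    intro z x hx
    refine Subgroup.closure_induction ?_ ?_ ?_ ?_ hx
    · rintro w ⟨u, -, y, hy, rfl⟩
      rw [lam_star]
      exact Subgroup.subset_closure ⟨_, trivial, _, ih z hy, rfl⟩
    · simpa using Subgroup.one_mem _
    · intro p q _ _ hp hq
      rw [lam_mul]; exact Subgroup.mul_mem _ hp hq
    · intro p _ hp
      rw [lam_inv]; exact Subgroup.inv_mem _ hp

/-- The lambda map as a monoid homomorphism. -/
def lamHom (z : A) : A →* A where
  toFun := lam z
  map_one' := lam_one z
  map_mul' := lam_mul z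

lemma gamma_lam {j : ℕ} (z : A) {x : A} (hx : x ∈ Subgroup.lowerCentralSeries (⊤ : Subgroup A) j) :
    lam z x ∈ Subgroup.lowerCentralSeries (⊤ : Subgroup A) j :=
  Subgroup.lowerCentralSeries.map (lamHom z) j ⟨x, hx, rfl⟩

lemma gamma_comm {j : ℕ} {x : A} (hx : x ∈ Subgroup.lowerCentralSeries (⊤ : Subgroup A) j) (a : A) :
    x * a * x⁻¹ * a⁻¹ ∈ Subgroup.lowerCentralSeries (⊤ : Subgroup A) (j + 1) := by
  rw [Subgroup.lowerCentralSeries_succ]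
  exact Subgroup.subset_closure ⟨x, hx, a, trivial, rfl⟩

lemma gamma_conj {j : ℕ} (z : A) {x : A} (hx : x ∈ Subgroup.lowerCentralSeries (⊤ : Subgroup A) j) :
    z * x * z⁻¹ ∈ Subgroup.lowerCentralSeries (⊤ : Subgroup A) j :=
  (Subgroup.lowerCentralSeries_normal ⊤ j).conj_mem x hx z

lemma delta_circComm {k : ℕ} {x : CircOf A} (hx : x ∈ Subgroup.lowerCentralSeries (⊤ : Subgroup (CircOf A)) k)
    (a : CircOf A) : x * a * x⁻¹ * a⁻¹ ∈ Subgroup.lowerCentralSeries (⊤ : Subgroup (CircOf A)) (k + 1) := by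
  rw [Subgroup.lowerCentralSeries_succ]
  exact Subgroup.subset_closure ⟨x, hx, a, trivial, rfl⟩

lemma delta_circConj {k : ℕ} (z : CircOf A) {x : CircOf A}
    (hx : x ∈ Subgroup.lowerCentralSeries (⊤ : Subgroup (CircOf A)) k) :
    z * x * z⁻¹ ∈ Subgroup.lowerCentralSeries (⊤ : Subgroup (CircOf A)) k :=
  (Subgroup.lowerCentralSeries_normal ⊤ k).conj_mem x hx z

/-! ### The W chain: right series refined by the lower central series -/

open scoped Pointwise

/-- Block `B i j = R (i+1) * (R i ∩ γ j)`. -/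
def wblock (i j : ℕ) : Set A :=
  ((rightSeries (A := A) (i + 1) : Subgroup A) : Set A) *
    (((rightSeries (A := A) i : Subgroup A) : Set A) ∩
      ((Subgroup.lowerCentralSeries (⊤ : Subgroup A) j : Subgroup A) : Set A))

lemma mem_wblock_intro {i j : ℕ} {u k : A} (hu : u ∈ rightSeries (A := A) (i + 1))
    (hk1 : k ∈ rightSeries (A := A) i) (hk2 : k ∈ Subgroup.lowerCentralSeries (⊤ : Subgroup A) j) :
    u * k ∈ wblock i j :=
  Set.mem_mul.mpr ⟨u, hu, k, ⟨hk1, hk2⟩, rfl⟩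

lemma mem_wblock_elim {i j : ℕ} {x : A} (hx : x ∈ wblock (A := A) i j) :
    ∃ u k, u ∈ rightSeries (A := A) (i + 1) ∧ k ∈ rightSeries (A := A) i ∧
      k ∈ Subgroup.lowerCentralSeries (⊤ : Subgroup A) j ∧ x = u * k := by
  obtain ⟨u, hu, k, ⟨hk1, hk2⟩, rfl⟩ := Set.mem_mul.mp hx
  exact ⟨u, k, hu, hk1, hk2, rfl⟩

lemma wblock_sub_right {i j : ℕ} {x : A} (hx : x ∈ wblock (A := A) i j) :
    x ∈ rightSeries (A := A) i := by
  obtain ⟨u, k, hu, hk1, -, rfl⟩ := mem_wblock_elim hx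
  exact Subgroup.mul_mem _ (rightSeries_mono_succ i hu) hk1

lemma right_sub_wblock {i j : ℕ} {m : A} (hm : m ∈ rightSeries (A := A) (i + 1)) :
    m ∈ wblock (A := A) i j := by
  have h : m = m * 1 := by group
  rw [h]
  exact mem_wblock_intro hm (Subgroup.one_mem _) (Subgroup.one_mem _)

lemma wblock_absorb_right {i j : ℕ} {x m : A} (hx : x ∈ wblock (A := A) i j)
    (hm : m ∈ rightSeries (A := A) (i + 1)) : x * m ∈ wblock (A := A) i j := by
  obtain ⟨u, k, hu, hk1, hk2, rfl⟩ := mem_wblock_elim hx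
  have h : u * k * m = (u * (k * m * k⁻¹)) * k := by group
  rw [h]
  exact mem_wblock_intro (Subgroup.mul_mem _ hu
    ((rightSeries_idealLike (i+1)).conj_mem k hm)) hk1 hk2

lemma wblock_absorb_left {i j : ℕ} {x m : A} (hm : m ∈ rightSeries (A := A) (i + 1))
    (hx : x ∈ wblock (A := A) i j) : m * x ∈ wblock (A := A) i j := by
  obtain ⟨u, k, hu, hk1, hk2, rfl⟩ := mem_wblock_elim hx
  have h : m * (u * k) = (m * u) * k := by group
  rw [h]
  exact mem_wblock_intro (Subgroup.mul_mem _ hm hu) hk1 hk2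

lemma wblock_star {i j : ℕ} {x : A} (hx : x ∈ wblock (A := A) i j) (a : A) :
    star x a ∈ rightSeries (A := A) (i + 1) :=
  rightSeries_star (wblock_sub_right hx) a

lemma wblock_comm {i j : ℕ} {x : A} (hx : x ∈ wblock (A := A) i j) (a : A) :
    x * a * x⁻¹ * a⁻¹ ∈ wblock (A := A) i (j + 1) := by
  obtain ⟨u, k, hu, hk1, hk2, rfl⟩ := mem_wblock_elim hx
  rw [grp_comm_mul_left]
  have hka : k * a * k⁻¹ * a⁻¹ ∈ wblock (A := A) i (j + 1) := by
    have h1 : k * a * k⁻¹ * a⁻¹ ∈ rightSeries (A := A) i :=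
      (rightSeries_idealLike i).comm_left_mem hk1 a
    have h2 := gamma_comm hk2 a
    have h : k * a * k⁻¹ * a⁻¹ = 1 * (k * a * k⁻¹ * a⁻¹) := by group
    rw [h]
    exact mem_wblock_intro (Subgroup.one_mem _) h1 h2
  have hconj : u * (k * a * k⁻¹ * a⁻¹) * u⁻¹ ∈ wblock (A := A) i (j + 1) := by
    have h : u * (k * a * k⁻¹ * a⁻¹) * u⁻¹
        = (u * (k * a * k⁻¹ * a⁻¹) * u⁻¹ * (k * a * k⁻¹ * a⁻¹)⁻¹) * (k * a * k⁻¹ * a⁻¹) := by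
      group
    rw [h]
    exact wblock_absorb_left ((rightSeries_idealLike (i+1)).comm_left_mem hu _) hka
  exact wblock_absorb_right hconj ((rightSeries_idealLike (i+1)).comm_left_mem hu a)

lemma wblock_mul {i j : ℕ} {x y : A} (hx : x ∈ wblock (A := A) i j)
    (hy : y ∈ wblock (A := A) i j) : x * y ∈ wblock (A := A) i j := by
  obtain ⟨u, k, hu, hk1, hk2, rfl⟩ := mem_wblock_elim hx
  obtain ⟨u', k', hu', hk1', hk2', rfl⟩ := mem_wblock_elim hy
  have h : (u * k) * (u' * k') = (u * (k * u' * k⁻¹)) * (k * k') := by group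
  rw [h]
  exact mem_wblock_intro (Subgroup.mul_mem _ hu
      ((rightSeries_idealLike (i+1)).conj_mem k hu'))
    (Subgroup.mul_mem _ hk1 hk1') (Subgroup.mul_mem _ hk2 hk2')

lemma wblock_inv {i j : ℕ} {x : A} (hx : x ∈ wblock (A := A) i j) :
    x⁻¹ ∈ wblock (A := A) i j := by
  obtain ⟨u, k, hu, hk1, hk2, rfl⟩ := mem_wblock_elim hx
  have h : (u * k)⁻¹ = (k⁻¹ * u⁻¹ * (k⁻¹)⁻¹) * k⁻¹ := by group
  rw [h]
  exact mem_wblock_intro ((rightSeries_idealLike (i+1)).conj_mem k⁻¹ (Subgroup.inv_mem _ hu))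
    (Subgroup.inv_mem _ hk1) (Subgroup.inv_mem _ hk2)

lemma wblock_conj {i j : ℕ} (z : A) {x : A} (hx : x ∈ wblock (A := A) i j) :
    z * x * z⁻¹ ∈ wblock (A := A) i j := by
  obtain ⟨u, k, hu, hk1, hk2, rfl⟩ := mem_wblock_elim hx
  have h : z * (u * k) * z⁻¹ = (z * u * z⁻¹) * (z * k * z⁻¹) := by group
  rw [h]
  exact mem_wblock_intro ((rightSeries_idealLike (i+1)).conj_mem z hu)
    ((rightSeries_idealLike i).conj_mem z hk1) (gamma_conj z hk2)

lemma wblock_lam {i j : ℕ} (z : A) {x : A} (hx : x ∈ wblock (A := A) i j) :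
    lam z x ∈ wblock (A := A) i j := by
  obtain ⟨u, k, hu, hk1, hk2, rfl⟩ := mem_wblock_elim hx
  rw [lam_mul]
  exact mem_wblock_intro ((rightSeries_idealLike (i+1)).lam_mem z hu)
    ((rightSeries_idealLike i).lam_mem z hk1) (gamma_lam z hk2)

lemma wblock_circConj {i j : ℕ} (z : A) {x : A} (hx : x ∈ wblock (A := A) i j) :
    circ (circ z x) (sinv z) ∈ wblock (A := A) i j := by
  rw [circ_conj_eq]
  have h1 : lam z x ∈ wblock (A := A) i j := wblock_lam z hx
  have h3 : lam z (star x (sinv z)) ∈ rightSeries (A := A) (i + 1) :=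
    (rightSeries_idealLike (i+1)).lam_mem z (wblock_star hx (sinv z))
  exact wblock_conj z (wblock_absorb_right h1 h3)

lemma wblock_idealLike (i j : ℕ) : IdealLike (wblock (A := A) i j) := by
  constructor
  · exact right_sub_wblock (Subgroup.one_mem _)
  · exact fun hx hy => wblock_mul hx hy
  · exact fun hx => wblock_inv hx
  · exact fun z {x} hx => wblock_conj z hx
  · exact fun z {x} hx => wblock_lam z hx
  · exact fun z {x} hx => wblock_circConj z hx

lemma wblock_antitone_gamma {i j : ℕ} : wblock (A := A) i (j + 1) ⊆ wblock (A := A) i j := by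
  intro x hx
  obtain ⟨u, k, hu, hk1, hk2, rfl⟩ := mem_wblock_elim hx
  exact mem_wblock_intro hu hk1 (Subgroup.lowerCentralSeries_antitone ⊤ (Nat.le_succ j) hk2)

/-! ### The flattened W chain -/

def Wchain (C t : ℕ) : Set A := wblock (t / C) (t % C)

lemma succ_divmod {C t : ℕ} (hC : 0 < C) :
    ((t + 1) / C = t / C ∧ (t + 1) % C = t % C + 1) ∨
      (t % C + 1 = C ∧ (t + 1) / C = t / C + 1 ∧ (t + 1) % C = 0) := by
  by_cases h : t % C + 1 < C
  · left
    have ht : t + 1 = (t % C + 1) + C * (t / C) := by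
      have := Nat.div_add_mod t C; omega
    constructor
    · rw [ht, Nat.add_mul_div_left _ _ hC, Nat.div_eq_of_lt h, zero_add]
    · rw [ht, Nat.add_mul_mod_self_left, Nat.mod_eq_of_lt h]
  · right
    have hEq : t % C + 1 = C := by
      have := Nat.mod_lt t hC; omega
    have ht : t + 1 = C * (t / C + 1) := by
      have := Nat.div_add_mod t C
      have h2 : C * (t / C + 1) = C * (t / C) + C := by ring
      omega
    refine ⟨hEq, ?_, ?_⟩
    · rw [ht, Nat.mul_div_cancel_left _ hC]
    · rw [ht, Nat.mul_mod_right]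

lemma mem_rightSeries_zero (x : A) : x ∈ rightSeries (A := A) 0 := Subgroup.mem_top x

lemma mem_gamma_zero (x : A) : x ∈ Subgroup.lowerCentralSeries (⊤ : Subgroup A) 0 := Subgroup.mem_top x

lemma Wchain_univ (C : ℕ) : Wchain (A := A) C 0 = Set.univ := by
  ext x
  simp only [Set.mem_univ, iff_true]
  show x ∈ wblock (0 / C) (0 % C)
  rw [Nat.zero_div, Nat.zero_mod]
  have h : x = 1 * x := by group
  rw [h]
  exact mem_wblock_intro (Subgroup.one_mem _) (mem_rightSeries_zero x) (mem_gamma_zero x)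

lemma Wchain_idealLike (C t : ℕ) : IdealLike (Wchain (A := A) C t) := wblock_idealLike _ _

lemma Wchain_mono (C : ℕ) (hC : 0 < C) (t : ℕ) :
    Wchain (A := A) C (t + 1) ⊆ Wchain (A := A) C t := by
  rcases succ_divmod (t := t) hC with ⟨h1, h2⟩ | ⟨h0, h1, h2⟩
  · show wblock _ _ ⊆ wblock _ _
    rw [h1, h2]
    exact wblock_antitone_gamma
  · show wblock _ _ ⊆ wblock _ _
    rw [h1, h2]
    intro x hx
    exact right_sub_wblock (wblock_sub_right hx)

lemma Wchain_star_comm (C : ℕ) (hC : 0 < C) (hγ : Subgroup.lowerCentralSeries (⊤ : Subgroup A) C = ⊥) (t : ℕ)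
    {x : A} (hx : x ∈ Wchain (A := A) C t) (a : A) :
    star x a ∈ Wchain (A := A) C (t + 1) ∧
      x * a * x⁻¹ * a⁻¹ ∈ Wchain (A := A) C (t + 1) := by
  rcases succ_divmod (t := t) hC with ⟨h1, h2⟩ | ⟨h0, h1, h2⟩
  · constructor
    · show star x a ∈ wblock _ _
      rw [h1, h2]
      exact right_sub_wblock (wblock_star hx a)
    · show x * a * x⁻¹ * a⁻¹ ∈ wblock _ _
      rw [h1, h2]
      exact wblock_comm hx a
  · constructor
    · show star x a ∈ wblock _ _
      rw [h1, h2]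
      have h : star x a = 1 * star x a := by group
      rw [h]
      exact mem_wblock_intro (Subgroup.one_mem _) (wblock_star hx a) (mem_gamma_zero _)
    · show x * a * x⁻¹ * a⁻¹ ∈ wblock _ _
      rw [h1, h2]
      have hcm := wblock_comm hx a
      rw [h0] at hcm
      obtain ⟨u, k, hu, hk1, hk2, heq⟩ := mem_wblock_elim hcm
      rw [hγ, Subgroup.mem_bot] at hk2
      subst hk2
      rw [mul_one] at heq
      rw [heq]
      have h : u = 1 * u := by group
      rw [h]
      exact mem_wblock_intro (Subgroup.one_mem _) hu (mem_gamma_zero _)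

lemma Wchain_bot {C m : ℕ} (hC : 0 < C) (hm : rightSeries (A := A) m = ⊥) (t : ℕ)
    (ht : m * C ≤ t) {x : A} (hx : x ∈ Wchain (A := A) C t) : x = 1 := by
  have hi : m ≤ t / C := (Nat.le_div_iff_mul_le hC).mpr ht
  obtain ⟨u, k, hu, hk1, hk2, rfl⟩ := mem_wblock_elim hx
  have hu1 : u ∈ rightSeries (A := A) m := rightSeries_antitone (le_trans hi (Nat.le_succ _)) hu
  have hk1' : k ∈ rightSeries (A := A) m := rightSeries_antitone hi hk1
  rw [hm, Subgroup.mem_bot] at hu1 hk1'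
  rw [hu1, hk1', mul_one]

/-! ### From a filtration to annihilator nilpotency -/

theorem annSeries_univ_of_filtration (F : ℕ → ℕ → Set A) (N K : ℕ)
    (hlink : ∀ n, F n K ⊆ F (n + 1) 0)
    (hstep : ∀ n k, k < K → ∀ x ∈ F n k, ∀ a : A,
      star x a ∈ F n (k + 1) ∧ x * a * x⁻¹ * a⁻¹ ∈ F n (k + 1) ∧
        circCommutator x a ∈ F n (k + 1))
    (hbot : F N 0 ⊆ {1}) (htop : F 0 0 = Set.univ) :
    annSeries (A := A) (N * K) = Set.univ := by
  have main : ∀ j, j ≤ N → F (N - j) 0 ⊆ annSeries (j * K) := by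
    intro j
    induction j with
    | zero =>
      intro _
      rw [Nat.sub_zero, Nat.zero_mul]
      exact hbot
    | succ j ih =>
      intro hj
      have ihj := ih (le_trans (Nat.le_succ j) hj)
      have hn1 : (N - (j + 1)) + 1 = N - j := by omega
      have inner : ∀ d, d ≤ K → F (N - (j + 1)) (K - d) ⊆ annSeries (j * K + d) := by
        intro d
        induction d with
        | zero =>
          intro _ x hx
          rw [Nat.add_zero]
          apply ihj
          rw [← hn1]
          exact hlink _ (by simpa using hx)
        | succ d ihd =>
          intro hd x hx
          have hd' : d ≤ K := le_trans (Nat.le_succ d) hd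
          have hk : K - (d + 1) < K := by omega
          have hkk : K - (d + 1) + 1 = K - d := by omega
          have e : annSeries (A := A) (j * K + (d + 1)) = annStep (annSeries (j * K + d)) := rfl
          rw [e]
          intro a
          have h3 := hstep _ (K - (d + 1)) hk x hx a
          rw [hkk] at h3
          exact ⟨ihd hd' h3.1, ihd hd' h3.2.1, ihd hd' h3.2.2⟩
      have hfin := inner K le_rfl
      rw [Nat.sub_self] at hfin
      have harith : j * K + K = (j + 1) * K := by ring
      rw [harith] at hfin
      exact hfin
  have h0 := main N le_rfl
  rw [Nat.sub_self, htop] at h0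
  exact Set.eq_univ_of_univ_subset h0

/-! ### Route (b): right nilpotent + both groups nilpotent implies annihilator nilpotent -/

def circSet (X Y : Set A) : Set A := {z | ∃ x ∈ X, ∃ y ∈ Y, z = circ x y}

def deltaSet (k : ℕ) : Set A := fun x => x ∈ Subgroup.lowerCentralSeries (⊤ : Subgroup (CircOf A)) k

lemma mem_deltaSet {k : ℕ} {x : A} :
    x ∈ deltaSet (A := A) k ↔ x ∈ Subgroup.lowerCentralSeries (⊤ : Subgroup (CircOf A)) k := Iff.rfl

def phiF (C : ℕ) (n k : ℕ) : Set A :=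
  Wchain C n ∩ circSet (Wchain C (n + 1)) (deltaSet k)

lemma delta_circComm' {k : ℕ} {x : A} (hx : x ∈ deltaSet (A := A) k) (a : A) :
    circCommutator x a ∈ deltaSet (A := A) (k + 1) := by
  rw [mem_deltaSet, Subgroup.lowerCentralSeries_succ]
  exact Subgroup.subset_closure ⟨x, hx, a, trivial, (circCommutator_eq_circOf x a).symm⟩

lemma delta_circConj' {k : ℕ} (z : A) {x : A} (hx : x ∈ deltaSet (A := A) k) :
    circ (circ z x) (sinv z) ∈ deltaSet (A := A) k := by
  rw [mem_deltaSet]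
  have h := (Subgroup.lowerCentralSeries_normal (G := CircOf A) ⊤ k).conj_mem x hx z
  have e : ∀ z x : CircOf A, z * x * z⁻¹ = circ (A := A) (circ (A := A) z x) (sinv (A := A) z) :=
    fun _ _ => rfl
  rwa [e z x] at h

lemma one_mem_deltaSet (k : ℕ) : (1 : A) ∈ deltaSet (A := A) k := by
  have h := Subgroup.one_mem (Subgroup.lowerCentralSeries (⊤ : Subgroup (CircOf A)) k)
  exact h

lemma mem_deltaSet_zero (x : A) : x ∈ deltaSet (A := A) 0 := by
  have h : ∀ y : CircOf A, y ∈ (⊤ : Subgroup (CircOf A)) := fun y => Subgroup.mem_top y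
  exact h x

lemma deltaSet_bot {ND : ℕ} (hδ : Subgroup.lowerCentralSeries (⊤ : Subgroup (CircOf A)) ND = ⊥) {d : A}
    (hd : d ∈ deltaSet (A := A) ND) : d = 1 := by
  rw [mem_deltaSet, hδ] at hd
  exact hd

lemma grp_conj_mul (u v : A) : circ (circ (circ u v) (sinv u)) u = circ u v := by
  have h : ∀ u v : CircOf A, (u * v * u⁻¹) * u = u * v := fun u v => by group
  exact h u v

lemma mem_circSet_self_left {X Y : Set A} {z : A} (hz : z ∈ X) (h1 : (1 : A) ∈ Y) :
    z ∈ circSet X Y := ⟨z, hz, 1, h1, (circ_one z).symm⟩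

lemma mem_circSet_self_right {X Y : Set A} {z : A} (h1 : (1 : A) ∈ X) (hz : z ∈ Y) :
    z ∈ circSet X Y := ⟨1, h1, z, hz, (one_circ z).symm⟩

theorem routeB {m C ND : ℕ} (hC : 0 < C)
    (hm : rightSeries (A := A) m = ⊥) (hγ : Subgroup.lowerCentralSeries (⊤ : Subgroup A) C = ⊥)
    (hδ : Subgroup.lowerCentralSeries (⊤ : Subgroup (CircOf A)) ND = ⊥) :
    annSeries (A := A) ((m * C) * ND) = Set.univ := by
  apply annSeries_univ_of_filtration (phiF C) (m * C) ND
  · -- hlink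
    intro n x hx
    obtain ⟨hxW, w, hw, d, hd, rfl⟩ := hx
    have hd1 : d = 1 := deltaSet_bot hδ hd
    subst hd1
    rw [circ_one]
    refine ⟨hw, ?_⟩
    exact mem_circSet_self_right (Wchain_idealLike C (n+2)).one_mem
      (mem_deltaSet_zero w)
  · -- hstep
    intro n k _ x hx a
    obtain ⟨hxW, w, hw, d, hd, hxeq⟩ := hx
    have hstar := (Wchain_star_comm C hC hγ n hxW a).1
    have hcomm := (Wchain_star_comm C hC hγ n hxW a).2
    refine ⟨⟨Wchain_mono C hC n hstar, mem_circSet_self_left hstar (one_mem_deltaSet _)⟩,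
      ⟨Wchain_mono C hC n hcomm, mem_circSet_self_left hcomm (one_mem_deltaSet _)⟩, ?_, ?_⟩
    · exact (Wchain_idealLike C n).circComm_left_mem hxW a
    · -- circ commutator lies in circSet (W (n+1)) (deltaSet (k+1))
      subst hxeq
      rw [circComm_mul]
      set q := circ (circ w (circCommutator d a)) (sinv w) with hq
      have hqmem : q ∈ deltaSet (A := A) (k + 1) := delta_circConj' w (delta_circComm' hd a)
      have hrmem : circCommutator w a ∈ Wchain (A := A) C (n + 1) :=
        (Wchain_idealLike C (n+1)).circComm_left_mem hw a
      refine ⟨circ (circ q (circCommutator w a)) (sinv q), ?_, q, hqmem, ?_⟩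
      · exact (Wchain_idealLike C (n+1)).circConj_mem q hrmem
      · exact (grp_conj_mul q (circCommutator w a)).symm
  · -- hbot
    intro x hx
    have := Wchain_bot hC hm (m * C) le_rfl hx.1
    simpa using this
  · -- htop
    ext x
    simp only [Set.mem_univ, iff_true]
    refine ⟨by rw [Wchain_univ]; trivial, ?_⟩
    exact mem_circSet_self_right (Wchain_idealLike C 1).one_mem (mem_deltaSet_zero x)

/-! ### The key identity for circle commutators -/

lemma sinv_mul_self_mem_of_star {M : Set A} (hM : IdealLike M) {x : A}
    (hx : ∀ b, star x b ∈ M) : sinv x * x ∈ M := by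
  have h1 : star x (sinv x) ∈ M := hx (sinv x)
  have h2 : star x (sinv x) = x⁻¹ * (sinv x)⁻¹ := by
    rw [star_eq_lam_mul_inv, lam_sinv_self]
  rw [h2] at h1
  have h3 := hM.inv_mem h1
  simpa [mul_inv_rev] using h3

lemma circComm_expand (x a : A) :
    circCommutator x a
      = x * lam x a * lam x (lam a (sinv x)) * lam x (lam a (lam (sinv x) (sinv a))) := by
  show circ (circ (circ x a) (sinv x)) (sinv a) = _
  rw [circ_eq_mul_lam (circ (circ x a) (sinv x)) (sinv a)]
  simp only [lam_circ]
  rw [circ_eq_mul_lam (circ x a) (sinv x)]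
  simp only [lam_circ]
  rw [circ_eq_mul_lam x a]

lemma circComm_keyid {M : Set A} (hM : IdealLike M) {x : A} (hx : ∀ b, star x b ∈ M) (a : A) :
    congM M (circCommutator x a) (x * a * x⁻¹ * (star a x)⁻¹ * a⁻¹) := by
  have e5 : ∀ z : A, congM M (lam x z) z := fun z =>
    ⟨star x z, hx z, lam_eq_star_mul x z⟩
  have hμ : sinv x * x ∈ M := sinv_mul_self_mem_of_star hM hx
  have e2 : congM M (lam a (sinv x)) (x⁻¹ * (star a x)⁻¹) := by
    refine ⟨lam a (sinv x * x), hM.lam_mem a hμ, ?_⟩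
    have h : lam a (sinv x * x) * (x⁻¹ * (star a x)⁻¹) = lam a (sinv x) := by
      rw [lam_mul, lam_eq_star_mul a x]
      group
    rw [← h]
  have e3 : congM M (lam (sinv x) (sinv a)) (sinv a) := by
    refine ⟨star (sinv x) (sinv a), ?_, lam_eq_star_mul _ _⟩
    rw [star_sinv_left]
    exact hM.inv_mem (hx _)
  have e4 : congM M (lam a (lam (sinv x) (sinv a))) a⁻¹ :=
    hM.congM_trans (hM.congM_lam a e3) (hM.congM_of_eq (lam_sinv_self a))
  have main : congM M (x * lam x a * lam x (lam a (sinv x)) *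
      lam x (lam a (lam (sinv x) (sinv a))))
      (x * a * (x⁻¹ * (star a x)⁻¹) * a⁻¹) := by
    refine hM.congM_mul (hM.congM_mul (hM.congM_mul (hM.congM_refl x) (e5 a)) ?_) ?_
    · exact hM.congM_trans (e5 _) e2
    · exact hM.congM_trans (e5 _) e4
  rw [circComm_expand]
  refine hM.congM_trans main (hM.congM_of_eq (by group))

/-! ### Route (a): the Q chain -/

def lblock (C n p : ℕ) : Set A :=
  Wchain C (n + 1) * (Wchain C n ∩ ((leftSeries (A := A) p : Subgroup A) : Set A))

open scoped Pointwise in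
lemma mem_lblock_intro {C n p : ℕ} {u k : A} (hu : u ∈ Wchain (A := A) C (n + 1))
    (hk1 : k ∈ Wchain (A := A) C n) (hk2 : k ∈ leftSeries (A := A) p) :
    u * k ∈ lblock (A := A) C n p :=
  Set.mem_mul.mpr ⟨u, hu, k, ⟨hk1, hk2⟩, rfl⟩

open scoped Pointwise in
lemma mem_lblock_elim {C n p : ℕ} {x : A} (hx : x ∈ lblock (A := A) C n p) :
    ∃ u k, u ∈ Wchain (A := A) C (n + 1) ∧ k ∈ Wchain (A := A) C n ∧
      k ∈ leftSeries (A := A) p ∧ x = u * k := by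
  obtain ⟨u, hu, k, ⟨hk1, hk2⟩, rfl⟩ := Set.mem_mul.mp hx
  exact ⟨u, k, hu, hk1, hk2, rfl⟩

lemma lblock_sub_W {C n p : ℕ} (hC : 0 < C) {x : A} (hx : x ∈ lblock (A := A) C n p) :
    x ∈ Wchain (A := A) C n := by
  obtain ⟨u, k, hu, hk1, -, rfl⟩ := mem_lblock_elim hx
  exact (Wchain_idealLike C n).mul_mem (Wchain_mono C hC n hu) hk1

lemma lblock_absorb_left {C n p : ℕ} {m x : A} (hm : m ∈ Wchain (A := A) C (n + 1))
    (hx : x ∈ lblock (A := A) C n p) : m * x ∈ lblock (A := A) C n p := by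
  obtain ⟨u, k, hu, hk1, hk2, rfl⟩ := mem_lblock_elim hx
  have h : m * (u * k) = (m * u) * k := by group
  rw [h]
  exact mem_lblock_intro ((Wchain_idealLike C (n+1)).mul_mem hm hu) hk1 hk2

lemma lblock_absorb_right {C n p : ℕ} {m x : A} (hx : x ∈ lblock (A := A) C n p)
    (hm : m ∈ Wchain (A := A) C (n + 1)) : x * m ∈ lblock (A := A) C n p := by
  obtain ⟨u, k, hu, hk1, hk2, rfl⟩ := mem_lblock_elim hx
  have h : (u * k) * m = (u * (k * m * k⁻¹)) * k := by group
  rw [h]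
  exact mem_lblock_intro ((Wchain_idealLike C (n+1)).mul_mem hu
    ((Wchain_idealLike C (n+1)).conj_mem k hm)) hk1 hk2

lemma W_sub_lblock {C n p : ℕ} {m : A} (hm : m ∈ Wchain (A := A) C (n + 1)) :
    m ∈ lblock (A := A) C n p := by
  have h : m = m * 1 := by group
  rw [h]
  exact mem_lblock_intro hm (Wchain_idealLike C n).one_mem (Subgroup.one_mem _)

lemma lblock_lam {C n p : ℕ} (z : A) {x : A} (hx : x ∈ lblock (A := A) C n p) :
    lam z x ∈ lblock (A := A) C n p := by
  obtain ⟨u, k, hu, hk1, hk2, rfl⟩ := mem_lblock_elim hx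
  rw [lam_mul]
  exact mem_lblock_intro ((Wchain_idealLike C (n+1)).lam_mem z hu)
    ((Wchain_idealLike C n).lam_mem z hk1) (leftSeries_lam p z hk2)

lemma lblock_conj {C n p : ℕ} (hC : 0 < C) (hγ : Subgroup.lowerCentralSeries (⊤ : Subgroup A) C = ⊥)
    (z : A) {x : A} (hx : x ∈ lblock (A := A) C n p) :
    z * x * z⁻¹ ∈ lblock (A := A) C n p := by
  obtain ⟨u, k, hu, hk1, hk2, rfl⟩ := mem_lblock_elim hx
  have hg : k * z * k⁻¹ * z⁻¹ ∈ Wchain (A := A) C (n + 1) :=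
    (Wchain_star_comm C hC hγ n hk1 z).2
  have hg' : z * k * z⁻¹ * k⁻¹ ∈ Wchain (A := A) C (n + 1) := by
    have h := (Wchain_idealLike C (n+1)).inv_mem hg
    have h2 : (k * z * k⁻¹ * z⁻¹)⁻¹ = z * k * z⁻¹ * k⁻¹ := by group
    rwa [h2] at h
  have h : z * (u * k) * z⁻¹ = ((z * u * z⁻¹) * (z * k * z⁻¹ * k⁻¹)) * k := by group
  rw [h]
  exact mem_lblock_intro ((Wchain_idealLike C (n+1)).mul_mem
    ((Wchain_idealLike C (n+1)).conj_mem z hu) hg') hk1 hk2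

lemma lblock_circConj {C n p : ℕ} (hC : 0 < C) (hγ : Subgroup.lowerCentralSeries (⊤ : Subgroup A) C = ⊥)
    (z : A) {x : A} (hx : x ∈ lblock (A := A) C n p) :
    circ (circ z x) (sinv z) ∈ lblock (A := A) C n p := by
  rw [circ_conj_eq]
  have h1 : lam z x ∈ lblock (A := A) C n p := lblock_lam z hx
  have h2 : star x (sinv z) ∈ Wchain (A := A) C (n + 1) :=
    (Wchain_star_comm C hC hγ n (lblock_sub_W hC hx) (sinv z)).1
  have h3 : lam z (star x (sinv z)) ∈ Wchain (A := A) C (n + 1) :=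
    (Wchain_idealLike C (n+1)).lam_mem z h2
  exact lblock_conj hC hγ z (lblock_absorb_right h1 h3)

theorem routeA {m C L : ℕ} (hC : 0 < C)
    (hm : rightSeries (A := A) m = ⊥) (hγ : Subgroup.lowerCentralSeries (⊤ : Subgroup A) C = ⊥)
    (hL : leftSeries (A := A) L = ⊥) :
    annSeries (A := A) ((m * C) * L) = Set.univ := by
  apply annSeries_univ_of_filtration (lblock C) (m * C) L
  · -- hlink
    intro n x hx
    obtain ⟨u, k, hu, hk1, hk2, rfl⟩ := mem_lblock_elim hx
    rw [hL, Subgroup.mem_bot] at hk2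
    subst hk2
    rw [mul_one]
    have h : u = 1 * u := by group
    rw [h]
    exact mem_lblock_intro (Wchain_idealLike C (n + 1 + 1)).one_mem hu (Subgroup.mem_top _)
  · -- hstep
    intro n p _ x hx a
    have hxW : x ∈ Wchain (A := A) C n := lblock_sub_W hC hx
    have hstar := (Wchain_star_comm C hC hγ n hxW a).1
    have hcomm := (Wchain_star_comm C hC hγ n hxW a).2
    refine ⟨W_sub_lblock hstar, W_sub_lblock hcomm, ?_⟩
    -- circle commutator
    obtain ⟨u, k, hu, hk1, hk2, rfl⟩ := mem_lblock_elim hx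
    set y := lam (sinv u) k with hy
    have hyW : y ∈ Wchain (A := A) C n := (Wchain_idealLike C n).lam_mem _ hk1
    have hyL : y ∈ leftSeries (A := A) p := leftSeries_lam p _ hk2
    have hdec : u * k = circ u y := mul_eq_circ_lam u k
    rw [hdec, circComm_mul]
    -- first, the inner commutator of y
    have hystar : ∀ b, star y b ∈ Wchain (A := A) C (n + 1) := fun b =>
      (Wchain_star_comm C hC hγ n hyW b).1
    have hkey := circComm_keyid (Wchain_idealLike C (n+1)) hystar a
    have hyA : circCommutator y a ∈ lblock (A := A) C n (p + 1) := by
      obtain ⟨mm, hmm, heq⟩ := hkey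
      rw [heq]
      apply lblock_absorb_left hmm
      -- y * a * y⁻¹ * (star a y)⁻¹ * a⁻¹ ∈ lblock
      set s := star a y with hs
      have hsW : s ∈ Wchain (A := A) C n := (Wchain_idealLike C n).star_right_mem a hyW
      have hsL : s ∈ leftSeries (A := A) (p + 1) := leftSeries_star hyL a
      have hcy : y * a * y⁻¹ * a⁻¹ ∈ Wchain (A := A) C (n + 1) :=
        (Wchain_star_comm C hC hγ n hyW a).2
      have hgg : s⁻¹ * a * (s⁻¹)⁻¹ * a⁻¹ ∈ Wchain (A := A) C (n + 1) :=
        (Wchain_star_comm C hC hγ n ((Wchain_idealLike C n).inv_mem hsW) a).2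
      have hsplit : y * a * y⁻¹ * s⁻¹ * a⁻¹
          = ((y * a * y⁻¹ * a⁻¹) * (s⁻¹ * a * (s⁻¹)⁻¹ * a⁻¹)⁻¹) * s⁻¹ := by
        group
      rw [hsplit]
      exact mem_lblock_intro ((Wchain_idealLike C (n+1)).mul_mem hcy
          ((Wchain_idealLike C (n+1)).inv_mem hgg))
        ((Wchain_idealLike C n).inv_mem hsW) (Subgroup.inv_mem _ hsL)
    have hconj : circ (circ u (circCommutator y a)) (sinv u) ∈ lblock (A := A) C n (p + 1) :=
      lblock_circConj hC hγ u hyA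
    have hua : circCommutator u a ∈ Wchain (A := A) C (n + 1) :=
      (Wchain_idealLike C (n+1)).circComm_left_mem hu a
    -- now assemble: circ of the two
    rw [circ_eq_mul_lam (circ (circ u (circCommutator y a)) (sinv u)) (circCommutator u a)]
    exact lblock_absorb_right hconj ((Wchain_idealLike C (n+1)).lam_mem _ hua)
  · -- hbot
    intro x hx
    have h1 := Wchain_bot hC hm (m * C) le_rfl (lblock_sub_W hC hx)
    simpa using h1
  · -- htop
    ext x
    simp only [Set.mem_univ, iff_true]
    have h : x = 1 * x := by group
    rw [h]
    exact mem_lblock_intro (Wchain_idealLike C 1).one_mem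
      (by rw [Wchain_univ]; trivial) (Subgroup.mem_top _)

/-- Equivalence of: (a) left and right nilpotent with nilpotent additive group;
(b) right nilpotent with both groups nilpotent; (c) annihilator nilpotent. -/

theorem annNilpotent_tfae {A : Type*} [SkewBrace A] :
    (((∃ n : ℕ, leftSeries (A := A) n = ⊥) ∧ (∃ n : ℕ, rightSeries (A := A) n = ⊥) ∧
        Group.IsNilpotent A) ↔ (∃ n : ℕ, annSeries (A := A) n = Set.univ)) ∧
    (((∃ n : ℕ, rightSeries (A := A) n = ⊥) ∧ Group.IsNilpotent A ∧
        Group.IsNilpotent (CircOf A)) ↔ (∃ n : ℕ, annSeries (A := A) n = Set.univ)) := by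
  constructor
  · constructor
    · rintro ⟨⟨l, hl⟩, ⟨r, hr⟩, hnil⟩
      obtain ⟨c, hc⟩ := Subgroup.nilpotent_iff_lowerCentralSeries.mp hnil
      have hc' : Subgroup.lowerCentralSeries (⊤ : Subgroup A) (c + 1) = ⊥ :=
        le_bot_iff.mp (hc ▸ Subgroup.lowerCentralSeries_antitone ⊤ (Nat.le_succ c))
      exact ⟨(r * (c + 1)) * l, routeA (Nat.succ_pos c) hr hc' hl⟩
    · rintro ⟨n, hn⟩
      exact ⟨⟨n, leftSeries_bot_of_ann hn⟩, ⟨n, rightSeries_bot_of_ann hn⟩,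
        isNilpotent_mul_of_ann hn⟩
  · constructor
    · rintro ⟨⟨r, hr⟩, hnilA, hnilC⟩
      obtain ⟨c, hc⟩ := Subgroup.nilpotent_iff_lowerCentralSeries.mp hnilA
      have hc' : Subgroup.lowerCentralSeries (⊤ : Subgroup A) (c + 1) = ⊥ :=
        le_bot_iff.mp (hc ▸ Subgroup.lowerCentralSeries_antitone ⊤ (Nat.le_succ c))
      obtain ⟨d, hd⟩ := Subgroup.nilpotent_iff_lowerCentralSeries.mp hnilC
      exact ⟨(r * (c + 1)) * d, routeB (Nat.succ_pos c) hr hc' hd⟩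
    · rintro ⟨n, hn⟩
      exact ⟨⟨n, rightSeries_bot_of_ann hn⟩, isNilpotent_mul_of_ann hn,
        isNilpotent_circ_of_ann hn⟩

end SB
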